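/- arXiv:1801.06994 — 4 statements merged into one kernel-verified Lean document; each statement's English description precedes it below -/
import Mathlib

section
/- Let K be a complete valued field (valuation into ℝ ∪ {∞}) whose value group is dense in ℝ, and let u be a reduced valuation on K^m. Then for every ε > 0 there exists a basis of K^m, obtained from the standard basis by a triangular change of coordinates, with respect to which |u(y) − min_i v(y_i)| ≤ ε for all y ∈ K^m expressed in the new coordinates. -/
/-!
Induction on `m`. On the hyperplane `y 0 = 0` the induction hypothesis gives a triangular basis
in which `u` is within `ε / 2` of `ṽ`, so the hyperplane is complete for `u`. Hence `u` is
bounded on the affine hyperplane `y 0 = 1`: an unbounded sequence there would be Cauchy, and its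
limit `x` would satisfy `u x = ⊤`. A vector `w` of the affine hyperplane nearly attaining the
supremum satisfies `u (z + c • w) ≤ u (c • w) + ε / 2` for all `z` in the hyperplane, and the
density of the value group rescales `w` to a vector `b` with `-ε / 2 ≤ u b ≤ 0`. Prepending `b`
to the basis of the hyperplane gives the required basis.
-/

open Matrix

theorem iInf_fin_succ {α : Type*} [CompleteLattice α] {n : ℕ} (f : Fin (n + 1) → α) :
    ⨅ i, f i = f 0 ⊓ ⨅ i : Fin n, f i.succ :=
  le_antisymm (le_inf (iInf_le _ 0) (le_iInf fun i => iInf_le _ i.succ))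
    (le_iInf fun i => Fin.cases inf_le_left (fun j => inf_le_right.trans (iInf_le _ j)) i)

namespace EReal

theorem coe_le_of_coe_add_le_add {r δ : ℝ} {x : EReal} (h : ((r + δ : ℝ) : EReal) ≤ x + δ) :
    (r : EReal) ≤ x :=
  (addLECancellable_coe δ).add_le_add_iff_right.1 (by rwa [← coe_add])

theorem exists_forall_le_add {α : Type*} [Nonempty α] {f : α → EReal} (hf : ∀ a, f a ≠ ⊥)
    {s : ℝ} (hs : ∀ a, f a ≤ s) {δ : ℝ} (hδ : 0 < δ) : ∃ a, ∀ b, f b ≤ f a + δ := by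
  set S := ⨆ a, f a
  have hS : (S.toReal : EReal) = S :=
    coe_toReal (ne_top_of_le_ne_top (coe_ne_top s) (iSup_le hs))
      (ne_bot_of_le_ne_bot (hf Classical.ofNonempty) (le_iSup f _))
  obtain ⟨a, ha⟩ := lt_iSup_iff.1 <|
    (EReal.coe_lt_coe_iff.2 (sub_lt_self S.toReal hδ)).trans_eq hS
  refine ⟨a, fun b => (le_iSup f b).trans ?_⟩
  calc S = ((S.toReal - δ : ℝ) : EReal) + δ := by rw [← coe_add, _root_.sub_add_cancel, hS]
    _ ≤ f a + δ := by gcongr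

end EReal

section Completeness

variable {E : Type*} [Sub E]

def IsCompleteFor (w : E → EReal) : Prop :=
  ∀ f : ℕ → E, (∀ r : ℝ, ∃ N, ∀ p ≥ N, ∀ q ≥ N, (r : EReal) ≤ w (f p - f q)) →
    ∃ a, ∀ r : ℝ, ∃ N, ∀ p ≥ N, (r : EReal) ≤ w (f p - a)

theorem IsCompleteFor.pi {ι : Type*} [Fintype ι] {w : E → EReal} (hw : IsCompleteFor w) :
    IsCompleteFor fun x : ι → E => ⨅ i, w (x i) := by
  intro f hf
  choose a N hN using fun i => hw (f · i) fun r =>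
    (hf r).imp fun _ hN p hp q hq => (hN p hp q hq).trans (iInf_le _ i)
  exact ⟨a, fun r => ⟨Finset.univ.sup (N · r), fun p hp =>
    le_iInf fun i => hN i r p ((Finset.le_sup (Finset.mem_univ i)).trans hp)⟩⟩

theorem IsCompleteFor.of_le_add {w₁ w₂ : E → EReal} (hw : IsCompleteFor w₁) {δ : ℝ}
    (h₁ : ∀ x, w₁ x ≤ w₂ x + δ) (h₂ : ∀ x, w₂ x ≤ w₁ x + δ) : IsCompleteFor w₂ := by
  intro f hf
  obtain ⟨a, ha⟩ := hw f fun r => (hf (r + δ)).imp fun _ hN p hp q hq =>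
    EReal.coe_le_of_coe_add_le_add ((hN p hp q hq).trans (h₂ _))
  exact ⟨a, fun r => (ha (r + δ)).imp fun _ hN p hp =>
    EReal.coe_le_of_coe_add_le_add ((hN p hp).trans (h₁ _))⟩

end Completeness

namespace Matrix

variable {R : Type*} [CommRing R] {n : ℕ}

-- The block matrix `!![b 0, 0; Fin.tail b, A]`.
def consColumn (b : Fin (n + 1) → R) (A : Matrix (Fin n) (Fin n) R) :
    Matrix (Fin (n + 1)) (Fin (n + 1)) R :=
  of fun i => Fin.cons (b i) fun j => (Fin.cons 0 fun k => A k j : Fin (n + 1) → R) i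

theorem consColumn_mulVec (b : Fin (n + 1) → R) (A : Matrix (Fin n) (Fin n) R)
    (y : Fin (n + 1) → R) :
    consColumn b A *ᵥ y = y 0 • b + Fin.cons 0 (A *ᵥ Fin.tail y) := by
  ext i
  refine Fin.cases ?_ (fun i => ?_) i <;>
    simp [consColumn, mulVec, dotProduct, Fin.sum_univ_succ, Fin.tail, mul_comm]

theorem det_consColumn (b : Fin (n + 1) → R) (A : Matrix (Fin n) (Fin n) R) :
    (consColumn b A).det = b 0 * A.det := by
  have hA : (consColumn b A).submatrix Fin.succ Fin.succ = A := rfl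
  rw [det_succ_row_zero, Fin.sum_univ_succ, Fin.succAbove_zero, hA]
  simp [consColumn]

theorem consColumn_eq_zero_of_lt {b : Fin (n + 1) → R} {A : Matrix (Fin n) (Fin n) R}
    (hA : ∀ i j, i < j → A i j = 0) {i j : Fin (n + 1)} (hij : i < j) : consColumn b A i j = 0 := by
  obtain ⟨j, rfl⟩ := Fin.exists_succ_eq.2 (Fin.ne_zero_of_lt hij)
  cases i using Fin.cases with
  | zero => simp [consColumn]
  | succ i => simpa [consColumn] using hA i j (Fin.succ_lt_succ_iff.1 hij)

end Matrix

section ReducedValuation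

variable {K : Type*} [Field K] {v : K → EReal}

theorem val_neg_one (hvbot : ∀ a, v a ≠ ⊥) (hvmul : ∀ a b, v (a * b) = v a + v b)
    (hv1 : v 1 ≠ ⊤) : v (-1) = 0 := by
  have h1 : v 1 = 0 := by
    obtain ⟨x, hx⟩ : ∃ x : ℝ, v 1 = x := ⟨_, (EReal.coe_toReal hv1 (hvbot 1)).symm⟩
    have h := hvmul 1 1
    rw [one_mul, hx] at h
    rw [hx]
    norm_cast at h ⊢
    linarith
  have h := hvmul (-1) (-1)
  rw [neg_one_mul, neg_neg, h1] at h
  have htop : v (-1) ≠ ⊤ := fun ht => by simp [ht] at h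
  obtain ⟨x, hx⟩ : ∃ x : ℝ, v (-1) = x := ⟨_, (EReal.coe_toReal htop (hvbot _)).symm⟩
  rw [hx] at h ⊢
  norm_cast at h ⊢
  linarith

variable {V : Type*} [AddCommGroup V] [Module K V]

structure IsReducedValuation (v : K → EReal) (u : V → EReal) : Prop where
  ne_bot : ∀ x, u x ≠ ⊥
  map_smul : ∀ (a : K) (x : V), u (a • x) = v a + u x
  min_le_map_add : ∀ x y, min (u x) (u y) ≤ u (x + y)
  eq_top_iff : ∀ x, u x = ⊤ ↔ x = 0

namespace IsReducedValuation

variable {u : V → EReal}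

theorem map_zero (hu : IsReducedValuation v u) : u 0 = ⊤ :=
  (hu.eq_top_iff 0).2 rfl

theorem min_le_map_sub (hu : IsReducedValuation v u) (hv : v (-1) = 0) (x y : V) :
    min (u x) (u y) ≤ u (x - y) := by
  have hneg : u (-y) = u y := by rw [← neg_one_smul K y, hu.map_smul, hv, zero_add]
  simpa [hneg, sub_eq_add_neg] using hu.min_le_map_add x (-y)

theorem comp {W : Type*} [AddCommGroup W] [Module K W] (hu : IsReducedValuation v u)
    (f : W →ₗ[K] V) (hf : Function.Injective f) : IsReducedValuation v (u ∘ f) where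
  ne_bot x := hu.ne_bot (f x)
  map_smul a x := by simp [hu.map_smul]
  min_le_map_add x y := by simpa using hu.min_le_map_add (f x) (f y)
  eq_top_iff x := by simp [hu.eq_top_iff, map_eq_zero_iff f hf]

theorem map_add_le_min_add (hu : IsReducedValuation v u) (hv : v (-1) = 0) {x y : V}
    {δ : ℝ} (hδ : 0 ≤ δ) (h : u (x + y) ≤ u y + δ) : u (x + y) ≤ min (u x) (u y) + δ := by
  have hx : min (u (x + y)) (u y) ≤ u x := by
    simpa using hu.min_le_map_sub hv (x + y) y
  rw [← min_add_add_right]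
  refine le_min ?_ h
  rcases le_total (u (x + y)) (u y) with hxy | hxy
  · exact (le_min le_rfl hxy |>.trans hx).trans
      (le_add_of_nonneg_right (EReal.coe_nonneg.2 hδ))
  · rw [min_eq_right hxy] at hx
    exact h.trans (by gcongr)

theorem exists_forall_map_add_le {E : Type*} [AddCommGroup E] (hu : IsReducedValuation v u)
    (hv : v (-1) = 0) (L : E →+ V) (hL : IsCompleteFor (u ∘ L)) {e : V}
    (he : ∀ t, e + L t ≠ 0) : ∃ s : ℝ, ∀ t, u (e + L t) ≤ s := by
  by_contra! h
  choose t ht using fun k : ℕ => h k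
  have hk {r : ℝ} {k : ℕ} (hrk : ⌈r⌉₊ ≤ k) : (r : EReal) < u (e + L (t k)) :=
    (EReal.coe_le_coe_iff.2 ((Nat.le_ceil r).trans (Nat.cast_le.2 hrk))).trans_lt (ht k)
  obtain ⟨a, ha⟩ := hL t fun r => ⟨⌈r⌉₊, fun p hp q hq => by
    simpa using (le_min (hk hp).le (hk hq).le).trans
      (hu.min_le_map_sub hv (e + L (t p)) (e + L (t q)))⟩
  refine he a ((hu.eq_top_iff _).1 ((EReal.eq_top_iff_forall_lt _).2 fun r => ?_))
  obtain ⟨N, hN⟩ := ha (r + 1)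
  have hr : (r : EReal) < u (L (t (max N ⌈r⌉₊) - a)) :=
    (EReal.coe_lt_coe_iff.2 (lt_add_one r)).trans_le (hN _ (le_max_left _ _))
  convert lt_min (hk (le_max_right _ _)) hr |>.trans_le
    (hu.min_le_map_sub hv (e + L (t (max N ⌈r⌉₊))) (L (t (max N ⌈r⌉₊) - a))) using 2
  simp only [map_sub]
  abel

theorem map_add_smul_le {E : Type*} [AddCommGroup E] [Module K E] (hu : IsReducedValuation v u)
    (L : E →ₗ[K] V) {e : V} {t₀ : E} {δ : ℝ} (ht₀ : ∀ t, u (e + L t) ≤ u (e + L t₀) + δ)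
    (t : E) (c : K) : u (L t + c • (e + L t₀)) ≤ u (c • (e + L t₀)) + δ := by
  rcases eq_or_ne c 0 with rfl | hc
  · simp [hu.map_zero]
  · have h : L t + c • (e + L t₀) = c • (e + L (t₀ + c⁻¹ • t)) := by
      rw [map_add, _root_.map_smul, smul_add, smul_add, smul_add, smul_inv_smul₀ hc]
      abel
    rw [h, hu.map_smul, hu.map_smul, add_assoc]
    gcongr
    exact ht₀ _

theorem exists_smul_almost_orthogonal {E : Type*} [AddCommGroup E] [Module K E]
    (hu : IsReducedValuation v u) (hv : v (-1) = 0)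
    (hdense : ∀ α β : ℝ, α < β → ∃ a : K, (α : EReal) < v a ∧ v a < (β : EReal))
    (L : E →ₗ[K] V) (hL : IsCompleteFor (u ∘ L)) {e : V} (he : ∀ t, e + L t ≠ 0)
    {δ : ℝ} (hδ : 0 < δ) :
    ∃ (a : K) (t₀ : E),
      (∀ t (c : K), u (L t + c • a • (e + L t₀)) ≤ u (c • a • (e + L t₀)) + δ) ∧
      u (a • (e + L t₀)) ≤ 0 ∧ 0 ≤ u (a • (e + L t₀)) + δ := by
  obtain ⟨s, hs⟩ := hu.exists_forall_map_add_le hv L.toAddMonoidHom hL he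
  obtain ⟨t₀, ht₀⟩ := EReal.exists_forall_le_add (fun t => hu.ne_bot (e + L t)) hs hδ
  obtain ⟨x, hx⟩ : ∃ x : ℝ, u (e + L t₀) = x :=
    ⟨_, (EReal.coe_toReal (mt (hu.eq_top_iff _).1 (he t₀)) (hu.ne_bot _)).symm⟩
  obtain ⟨a, ha₁, ha₂⟩ := hdense (-x - δ) (-x) (by linarith)
  obtain ⟨y, hy⟩ : ∃ y : ℝ, v a = y := ⟨_, (EReal.coe_toReal ha₂.ne_top ha₁.ne_bot).symm⟩
  rw [hy] at ha₁ ha₂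
  norm_cast at ha₁ ha₂
  refine ⟨a, t₀, fun t c => ?_, ?_, ?_⟩
  · rw [smul_smul]
    exact hu.map_add_smul_le L ht₀ t (c * a)
  all_goals rw [hu.map_smul, hx, hy]; norm_cast; linarith

end IsReducedValuation

-- For `ε = 0` this says that the columns of `A` form an orthonormal basis for `u`.
def IsOrthonormalUpTo (v : K → EReal) {ι : Type*} [Fintype ι] (u : (ι → K) → EReal) (ε : ℝ)
    (A : Matrix ι ι K) : Prop :=
  ∀ y : ι → K, u (A *ᵥ y) ≤ (⨅ i, v (y i)) + ε ∧ (⨅ i, v (y i)) ≤ u (A *ᵥ y) + ε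

theorem isOrthonormalUpTo_consColumn {n : ℕ} {u : (Fin (n + 1) → K) → EReal}
    (hu : IsReducedValuation v u) (hv : v (-1) = 0) {δ : ℝ} (hδ : 0 ≤ δ)
    {A : Matrix (Fin n) (Fin n) K} (hA : IsOrthonormalUpTo v (fun x => u (Fin.cons 0 x)) δ A)
    {b : Fin (n + 1) → K} (hb : ∀ t (c : K), u (Fin.cons 0 (A *ᵥ t) + c • b) ≤ u (c • b) + δ)
    (hb₁ : u b ≤ 0) (hb₂ : 0 ≤ u b + δ) :
    IsOrthonormalUpTo v u (δ + δ) (consColumn b A) := by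
  intro y
  obtain ⟨hz₁, hz₂⟩ := hA (Fin.tail y)
  have hc₁ : u (y 0 • b) ≤ v (y 0) := by
    simpa [hu.map_smul] using add_le_add_right hb₁ (v (y 0))
  have hc₂ : v (y 0) ≤ u (y 0 • b) + δ := by
    simpa [hu.map_smul, add_assoc] using add_le_add_right hb₂ (v (y 0))
  rw [consColumn_mulVec, add_comm, iInf_fin_succ, EReal.coe_add, ← add_assoc, ← add_assoc]
  set z : Fin (n + 1) → K := Fin.cons 0 (A *ᵥ Fin.tail y)
  set w := ⨅ i : Fin n, v (Fin.tail y i)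
  constructor
  · calc u (z + y 0 • b) ≤ min (u z) (u (y 0 • b)) + δ := hu.map_add_le_min_add hv hδ (hb _ _)
      _ ≤ min (w + δ) (v (y 0) + δ) + δ := by
        gcongr
        exact hc₁.trans (le_add_of_nonneg_right (EReal.coe_nonneg.2 hδ))
      _ = min (v (y 0)) w + δ + δ := by rw [min_add_add_right, min_comm]
  · calc min (v (y 0)) w ≤ min (u (y 0 • b) + δ) (u z + δ) := min_le_min hc₂ hz₂
      _ = min (u z) (u (y 0 • b)) + δ := by rw [min_add_add_right, min_comm]
      _ ≤ u (z + y 0 • b) + δ := by gcongr; exact hu.min_le_map_add _ _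
      _ ≤ u (z + y 0 • b) + δ + δ := le_add_of_nonneg_right (EReal.coe_nonneg.2 hδ)

theorem exists_isOrthonormalUpTo (hv : v (-1) = 0)
    (hdense : ∀ α β : ℝ, α < β → ∃ a : K, (α : EReal) < v a ∧ v a < (β : EReal))
    (hcomplete : IsCompleteFor v) {n : ℕ} {u : (Fin n → K) → EReal}
    (hu : IsReducedValuation v u) {ε : ℝ} (hε : 0 < ε) :
    ∃ A : Matrix (Fin n) (Fin n) K, IsUnit A.det ∧ (∀ i j, i < j → A i j = 0) ∧
      IsOrthonormalUpTo v u ε A := by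
  induction n generalizing ε with
  | zero =>
    refine ⟨1, by simp, fun i => i.elim0, fun y => ?_⟩
    have hy : u y = ⊤ := by rw [Subsingleton.elim y 0, hu.map_zero]
    simp [hy, iInf_of_empty]
  | succ n ih =>
    let f : (Fin n → K) →ₗ[K] Fin (n + 1) → K :=
      (Fin.consLinearEquiv K fun _ => K).toLinearMap ∘ₗ LinearMap.inr K K _
    obtain ⟨A, hAdet, hAlow, hA⟩ :=
      ih (hu.comp f fun _ _ h => Fin.cons_right_injective (α := fun _ => K) 0 h) (half_pos hε)
    let L := f ∘ₗ A.mulVecLin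
    have hL : IsCompleteFor (u ∘ L) :=
      hcomplete.pi.of_le_add (fun t => (hA t).2) (fun t => (hA t).1)
    have he (t : Fin n → K) : Pi.single 0 1 + L t ≠ 0 := fun h => by
      simpa [L, f] using congrFun h 0
    obtain ⟨a, t₀, hb, hb₁, hb₂⟩ :=
      hu.exists_smul_almost_orthogonal hv hdense L hL he (half_pos hε)
    have ha : a ≠ 0 := by
      rintro rfl
      simp [hu.map_zero] at hb₁
    refine ⟨consColumn (a • (Pi.single 0 1 + L t₀)) A, ?_,
      fun _ _ => consColumn_eq_zero_of_lt hAlow, ?_⟩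
    · simpa [det_consColumn, L, f, ha] using hAdet
    · simpa using isOrthonormalUpTo_consColumn hu hv (half_pos hε).le hA hb hb₁ hb₂

end ReducedValuation

theorem reduced_valuation_close_to_min_general {K : Type*} [Field K]
    (v : K → EReal) (hvbot : ∀ a, v a ≠ ⊥)
    (hvmul : ∀ a b, v (a * b) = v a + v b)
    (hker : ∀ a : K, v a = ⊤ → a = 0)
    (hdense : ∀ α β : ℝ, α < β → ∃ a : K, (α : EReal) < v a ∧ v a < (β : EReal))
    (hcomplete : ∀ f : ℕ → K,
      (∀ r : ℝ, ∃ N, ∀ p ≥ N, ∀ q ≥ N, (r : EReal) ≤ v (f p - f q)) →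
      ∃ a : K, ∀ r : ℝ, ∃ N, ∀ p ≥ N, (r : EReal) ≤ v (f p - a))
    {m : ℕ} (u : (Fin m → K) → EReal) (hubot : ∀ x, u x ≠ ⊥)
    (husmul : ∀ (a : K) (x : Fin m → K), u (a • x) = v a + u x)
    (huadd : ∀ x y, min (u x) (u y) ≤ u (x + y))
    (hured : ∀ x, u x = ⊤ ↔ x = 0)
    (ε : ℝ) (hε : 0 < ε) :
    ∃ A : Matrix (Fin m) (Fin m) K, IsUnit A.det ∧ (∀ i j : Fin m, i < j → A i j = 0) ∧
      ∀ y : Fin m → K,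
        u (A.mulVec y) ≤ (⨅ i, v (y i)) + (ε : EReal) ∧
        (⨅ i, v (y i)) ≤ u (A.mulVec y) + (ε : EReal) :=
  exists_isOrthonormalUpTo (val_neg_one hvbot hvmul fun h => one_ne_zero (hker 1 h)) hdense
    hcomplete ⟨hubot, husmul, huadd, hured⟩ hε

/-- Over a complete valued field with dense value group, any reduced valuation
on `K^m` is, up to a triangular change of coordinates, within `ε` of the valuation
`ṽ(y) = min_i v(y_i)`. -/
theorem reduced_valuation_close_to_min {K : Type*} [Field K]
    (v : K → EReal) (hv0 : v 0 = ⊤) (hvbot : ∀ a, v a ≠ ⊥)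
    (hvmul : ∀ a b, v (a * b) = v a + v b)
    (hvadd : ∀ a b, min (v a) (v b) ≤ v (a + b))
    (hker : ∀ a : K, v a = ⊤ → a = 0)
    (hdense : ∀ α β : ℝ, α < β → ∃ a : K, (α : EReal) < v a ∧ v a < (β : EReal))
    (hcomplete : ∀ f : ℕ → K,
      (∀ r : ℝ, ∃ N, ∀ p ≥ N, ∀ q ≥ N, (r : EReal) ≤ v (f p - f q)) →
      ∃ a : K, ∀ r : ℝ, ∃ N, ∀ p ≥ N, (r : EReal) ≤ v (f p - a))
    {m : ℕ} (u : (Fin m → K) → EReal) (hubot : ∀ x, u x ≠ ⊥)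
    (husmul : ∀ (a : K) (x : Fin m → K), u (a • x) = v a + u x)
    (huadd : ∀ x y, min (u x) (u y) ≤ u (x + y))
    (hured : ∀ x, u x = ⊤ ↔ x = 0)
    (ε : ℝ) (hε : 0 < ε) :
    ∃ A : Matrix (Fin m) (Fin m) K, IsUnit A.det ∧ (∀ i j : Fin m, i < j → A i j = 0) ∧
      ∀ y : Fin m → K,
        u (A.mulVec y) ≤ (⨅ i, v (y i)) + (ε : EReal) ∧
        (⨅ i, v (y i)) ≤ u (A.mulVec y) + (ε : EReal) :=
  reduced_valuation_close_to_min_general v hvbot hvmul hker hdense hcomplete u hubot husmul huadd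
    hured ε hε
end

section
/- Let A be a commutative ring and let u be the sub-valuation generated by a set of conditions C as in Lemma [generated sub-valuation]. Then u is proper (u(1) = 0) if and only if for every family (b_{ij}, α_{ij}) ∈ C with Σ_i Π_j b_{ij} = 1, we have min_i Σ_j α_{ij} ≤ 0. -/
/-- The sub-valuation generated by a set of conditions `C` on a commutative ring `A`:
`u(a) = sup { (1/n) · min_i Σ_j α_{ij} : n ≥ 1, aⁿ = Σ_i Π_j b_{ij}, (b_{ij}, α_{ij}) ∈ C }`.
Presentations are coded by lists of lists of conditions. -/
noncomputable def genSubVal {A : Type*} [CommRing A] (C : Set (A × EReal)) (a : A) : EReal :=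
  sSup { r : EReal | ∃ n : ℕ, 1 ≤ n ∧ ∃ P : List (List (A × EReal)),
    (∀ p ∈ P.flatten, p ∈ C) ∧
    (P.map fun l => (l.map Prod.fst).prod).sum = a ^ n ∧
    r = (((n : ℝ)⁻¹ : ℝ) : EReal) * ((P.map fun l => (l.map Prod.snd).sum).foldr min ⊤) }

/-- The generated sub-valuation `⟨C⟩` is proper (`u(1) = 0`) if and only if
for every family `(b_{ij}, α_{ij}) ∈ C` with `Σ_i Π_j b_{ij} = 1` we have
`min_i Σ_j α_{ij} ≤ 0`. -/
theorem genSubVal_proper_iff {A : Type*} [CommRing A] (C : Set (A × EReal))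
    (hgen : Subring.closure (Prod.fst '' C) = ⊤) :
    genSubVal C 1 = 0 ↔
      ∀ P : List (List (A × EReal)), (∀ p ∈ P.flatten, p ∈ C) →
        (P.map fun l => (l.map Prod.fst).prod).sum = 1 →
        (P.map fun l => (l.map Prod.snd).sum).foldr min ⊤ ≤ 0 := by
  have hmem0 : (0 : EReal) ∈ { r : EReal | ∃ n : ℕ, 1 ≤ n ∧ ∃ P : List (List (A × EReal)),
      (∀ p ∈ P.flatten, p ∈ C) ∧
      (P.map fun l => (l.map Prod.fst).prod).sum = (1 : A) ^ n ∧
      r = (((n : ℝ)⁻¹ : ℝ) : EReal) * ((P.map fun l => (l.map Prod.snd).sum).foldr min ⊤) } := by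
    refine ⟨1, le_refl 1, [[]], by simp, by simp, by simp⟩
  constructor
  · intro h P hPC hP1
    have hmem : ((P.map fun l => (l.map Prod.snd).sum).foldr min ⊤) ∈
        { r : EReal | ∃ n : ℕ, 1 ≤ n ∧ ∃ P : List (List (A × EReal)),
          (∀ p ∈ P.flatten, p ∈ C) ∧
          (P.map fun l => (l.map Prod.fst).prod).sum = (1 : A) ^ n ∧
          r = (((n : ℝ)⁻¹ : ℝ) : EReal) * ((P.map fun l => (l.map Prod.snd).sum).foldr min ⊤) } := by
      refine ⟨1, le_refl 1, P, hPC, by simpa using hP1, by simp⟩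
    calc ((P.map fun l => (l.map Prod.snd).sum).foldr min ⊤) ≤ genSubVal C 1 :=
          le_sSup hmem
      _ = 0 := h
  · intro h
    apply le_antisymm
    · apply sSup_le
      rintro r ⟨n, hn, P, hPC, hP1, rfl⟩
      have hmin : ((P.map fun l => (l.map Prod.snd).sum).foldr min ⊤) ≤ 0 :=
        h P hPC (by simpa using hP1)
      have hc : (0 : EReal) ≤ (((n : ℝ)⁻¹ : ℝ) : EReal) := by
        exact_mod_cast inv_nonneg.mpr (Nat.cast_nonneg n)
      exact mul_nonpos_of_nonneg_of_nonpos hc hmin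
    · exact le_sSup hmem0
end

section
/- Let E and F be valued vector spaces over a valued field K, and define the tensor product valuation on E ⊗_K F as (u_E ⊗ u_F)(z) = sup over all presentations z = Σ_i x_i ⊗ y_i of min_i (u_E(x_i) + u_F(y_i)). Then u_E ⊗ u_F is a vector space valuation on E ⊗_K F and it is the least valuation w satisfying w(x ⊗ y) ≥ u_E(x) + u_F(y) for all simple tensors. -/
open scoped TensorProduct

/-- The tensor product valuation on `E ⊗[K] F`:
`(u_E ⊗ u_F)(z) = sup over presentations z = Σ_i x_i ⊗ y_i of min_i (u_E x_i + u_F y_i)`.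
Presentations are coded by lists of pairs. -/
noncomputable def tensVal {K E F : Type*} [Field K]
    [AddCommGroup E] [Module K E] [AddCommGroup F] [Module K F]
    (uE : E → EReal) (uF : F → EReal) (z : E ⊗[K] F) : EReal :=
  sSup { r : EReal | ∃ P : List (E × F),
    (P.map fun p => p.1 ⊗ₜ[K] p.2).sum = z ∧
    r = (P.map fun p => uE p.1 + uF p.2).foldr min ⊤ }

/-!
For `a ≠ 0` the presentations of `a • z` are exactly those of `z` with every `x_i` replaced by
`a • x_i`, which adds `v a` to every term `u_E x_i + u_F y_i`; this gives homogeneity.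
Concatenating presentations of `z` and `z'` presents `z + z'`, with value the minimum of the two
values; this gives the ultrametric inequality. Minimality holds presentation by presentation,
since any `w` as in the statement satisfies `w (Σ x_i ⊗ y_i) ≥ min_i w (x_i ⊗ y_i)`.
-/

lemma EReal.add_sSup_le {c T : EReal} {S : Set EReal} (h : ∀ r ∈ S, c + r ≤ T) :
    c + sSup S ≤ T :=
  EReal.add_le_of_forall_lt fun _ hc' _ hr' =>
    let ⟨r, hr, hr'r⟩ := lt_sSup_iff.1 hr'
    (add_le_add hc'.le hr'r.le).trans (h r hr)

lemma apply_zero_eq_top_of_map_smul {R M : Type*} [Zero R] [Zero M] [SMulZeroClass R M]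
    {v : R → EReal} {w : M → EReal} (hv0 : v 0 = ⊤) (hw : ∀ a x, w (a • x) = v a + w x)
    (h0 : w 0 ≠ ⊥) : w 0 = ⊤ := by
  simpa [hv0, EReal.top_add_of_ne_bot h0] using hw 0 0

noncomputable def presentationVal {M N : Type*} (uM : M → EReal) (uN : N → EReal)
    (P : List (M × N)) : EReal :=
  (P.map fun p => uM p.1 + uN p.2).foldr min ⊤

section PresentationVal

variable {M N : Type*} {uM : M → EReal} {uN : N → EReal}

@[simp]
lemma presentationVal_append (P Q : List (M × N)) :
    presentationVal uM uN (P ++ Q) = min (presentationVal uM uN P) (presentationVal uM uN Q) := by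
  induction P with
  | nil => simp [presentationVal]
  | cons p P ih => simp_all [presentationVal, min_assoc]

lemma presentationVal_ne_bot (huM : ∀ x, uM x ≠ ⊥) (huN : ∀ y, uN y ≠ ⊥) (P : List (M × N)) :
    presentationVal uM uN P ≠ ⊥ := by
  induction P with
  | nil => simp [presentationVal]
  | cons p P ih =>
    simp only [presentationVal, List.map_cons, List.foldr_cons, ← bot_lt_iff_ne_bot,
      lt_min_iff] at ih ⊢
    exact ⟨bot_lt_iff_ne_bot.2 (EReal.add_ne_bot_iff.2 ⟨huM p.1, huN p.2⟩), ih⟩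

lemma presentationVal_map_smul_fst {R : Type*} [SMul R M] {a : R} {c : EReal} (hc : c ≠ ⊥)
    (huM : ∀ x, uM (a • x) = c + uM x) (P : List (M × N)) :
    presentationVal uM uN (P.map (Prod.map (a • ·) id)) = c + presentationVal uM uN P := by
  induction P with
  | nil => simp [presentationVal, EReal.add_top_of_ne_bot hc]
  | cons p P ih =>
    simp_all [presentationVal, ← min_add_add_left, add_assoc]

end PresentationVal

section PresentationSum

variable {R M N : Type*} [CommSemiring R] [AddCommMonoid M] [AddCommMonoid N]
  [Module R M] [Module R N]

variable (R) in
def presentationSum (P : List (M × N)) : M ⊗[R] N :=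
  (P.map fun p => p.1 ⊗ₜ[R] p.2).sum

@[simp]
lemma presentationSum_append (P Q : List (M × N)) :
    presentationSum R (P ++ Q) = presentationSum R P + presentationSum R Q := by
  simp [presentationSum]

lemma exists_presentationSum_eq (z : M ⊗[R] N) : ∃ P : List (M × N), presentationSum R P = z := by
  induction z using TensorProduct.induction_on with
  | zero => exact ⟨[], rfl⟩
  | tmul x y => exact ⟨[(x, y)], by simp [presentationSum]⟩
  | add z z' hz hz' =>
    obtain ⟨P, rfl⟩ := hz
    obtain ⟨Q, rfl⟩ := hz'
    exact ⟨P ++ Q, presentationSum_append P Q⟩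

lemma presentationSum_map_smul_fst (a : R) (P : List (M × N)) :
    presentationSum R (P.map (Prod.map (a • ·) id)) = a • presentationSum R P := by
  simp [presentationSum, List.smul_sum, Function.comp_def, TensorProduct.smul_tmul']

lemma presentationVal_le_apply_presentationSum {w : M ⊗[R] N → EReal} (hw0 : w 0 = ⊤)
    (hwadd : ∀ z z', min (w z) (w z') ≤ w (z + z'))
    (hwtmul : ∀ x y, uM x + uN y ≤ w (x ⊗ₜ[R] y)) (P : List (M × N)) :
    presentationVal uM uN P ≤ w (presentationSum R P) := by
  induction P with
  | nil => simp [presentationVal, presentationSum, hw0]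
  | cons p P ih =>
    simp only [presentationVal, presentationSum, List.map_cons, List.foldr_cons,
      List.sum_cons] at ih ⊢
    exact (min_le_min (hwtmul p.1 p.2) ih).trans (hwadd _ _)

end PresentationSum

section TensVal

variable {K E F : Type*} [Field K] [AddCommGroup E] [Module K E] [AddCommGroup F] [Module K F]
  {uE : E → EReal} {uF : F → EReal}

lemma le_tensVal {P : List (E × F)} {z : E ⊗[K] F} (hP : presentationSum K P = z) :
    presentationVal uE uF P ≤ tensVal uE uF z :=
  le_sSup ⟨P, hP, rfl⟩

lemma tensVal_le {z : E ⊗[K] F} {T : EReal}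
    (h : ∀ P, presentationSum K P = z → presentationVal uE uF P ≤ T) : tensVal uE uF z ≤ T :=
  sSup_le <| by
    rintro _ ⟨P, hP, rfl⟩
    exact h P hP

lemma lt_tensVal_iff {z : E ⊗[K] F} {r : EReal} :
    r < tensVal uE uF z ↔ ∃ P, presentationSum K P = z ∧ r < presentationVal uE uF P := by
  simp only [tensVal, lt_sSup_iff]
  constructor
  · rintro ⟨_, ⟨P, hP, rfl⟩, hr⟩
    exact ⟨P, hP, hr⟩
  · rintro ⟨P, hP, hr⟩
    exact ⟨_, ⟨P, hP, rfl⟩, hr⟩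

lemma add_tensVal_le {z : E ⊗[K] F} {c T : EReal}
    (h : ∀ P, presentationSum K P = z → c + presentationVal uE uF P ≤ T) :
    c + tensVal uE uF z ≤ T :=
  EReal.add_sSup_le <| by
    rintro _ ⟨P, hP, rfl⟩
    exact h P hP

lemma tensVal_zero : tensVal uE uF (0 : E ⊗[K] F) = ⊤ :=
  top_le_iff.1 (le_tensVal (P := []) rfl)

lemma tensVal_ne_bot (huE : ∀ x, uE x ≠ ⊥) (huF : ∀ y, uF y ≠ ⊥) (z : E ⊗[K] F) :
    tensVal uE uF z ≠ ⊥ :=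
  let ⟨P, hP⟩ := exists_presentationSum_eq z
  ne_bot_of_le_ne_bot (presentationVal_ne_bot huE huF P) (le_tensVal hP)

lemma le_tensVal_tmul (x : E) (y : F) : uE x + uF y ≤ tensVal uE uF (x ⊗ₜ[K] y) :=
  calc uE x + uF y = presentationVal uE uF [(x, y)] := by simp [presentationVal]
    _ ≤ tensVal uE uF (x ⊗ₜ[K] y) := le_tensVal (by simp [presentationSum])

lemma min_tensVal_le_tensVal_add (z z' : E ⊗[K] F) :
    min (tensVal uE uF z) (tensVal uE uF z') ≤ tensVal uE uF (z + z') := by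
  refine le_of_forall_lt fun r hr => ?_
  obtain ⟨P, hP, hrP⟩ := lt_tensVal_iff.1 (hr.trans_le (min_le_left _ _))
  obtain ⟨Q, hQ, hrQ⟩ := lt_tensVal_iff.1 (hr.trans_le (min_le_right _ _))
  calc r < min (presentationVal uE uF P) (presentationVal uE uF Q) := lt_min hrP hrQ
    _ = presentationVal uE uF (P ++ Q) := (presentationVal_append P Q).symm
    _ ≤ tensVal uE uF (z + z') := le_tensVal (by rw [presentationSum_append, hP, hQ])

lemma tensVal_smul_of_ne_zero {a : K} (ha : a ≠ 0) {c : EReal} (hc : c ≠ ⊥)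
    (huE : ∀ x, uE (a • x) = c + uE x) (z : E ⊗[K] F) :
    tensVal uE uF (a • z) = c + tensVal uE uF z := by
  refine le_antisymm (tensVal_le fun P hP => ?_) (add_tensVal_le fun P hP => ?_)
  · set Q := P.map (Prod.map (a⁻¹ • ·) id)
    have hPQ : P = Q.map (Prod.map (a • ·) id) := by
      simp [Q, Function.comp_def, Prod.map, smul_smul, mul_inv_cancel₀ ha]
    have hQ : presentationSum K Q = z := by
      rw [presentationSum_map_smul_fst, hP, smul_smul, inv_mul_cancel₀ ha, one_smul]
    rw [hPQ, presentationVal_map_smul_fst hc huE]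
    gcongr
    exact le_tensVal hQ
  · rw [← presentationVal_map_smul_fst hc huE]
    exact le_tensVal (by rw [presentationSum_map_smul_fst, hP])

lemma tensVal_le_of_le_tmul {w : E ⊗[K] F → EReal} (hw0 : w 0 = ⊤)
    (hwadd : ∀ z z', min (w z) (w z') ≤ w (z + z'))
    (hwtmul : ∀ x y, uE x + uF y ≤ w (x ⊗ₜ[K] y)) (z : E ⊗[K] F) : tensVal uE uF z ≤ w z :=
  tensVal_le fun P hP => hP ▸ presentationVal_le_apply_presentationSum hw0 hwadd hwtmul P

end TensVal

theorem tensVal_is_least_valuation_general {K E F : Type*} [Field K]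
    [AddCommGroup E] [Module K E] [AddCommGroup F] [Module K F]
    (v : K → EReal) (hv0 : v 0 = ⊤) (hvbot : ∀ a, v a ≠ ⊥)
    (uE : E → EReal) (uEbot : ∀ x, uE x ≠ ⊥)
    (uEsmul : ∀ (a : K) (x : E), uE (a • x) = v a + uE x)
    (uF : F → EReal) (uFbot : ∀ y, uF y ≠ ⊥) :
    (∀ (a : K) (z : E ⊗[K] F), tensVal uE uF (a • z) = v a + tensVal uE uF z) ∧
    (∀ z w : E ⊗[K] F, min (tensVal uE uF z) (tensVal uE uF w) ≤ tensVal uE uF (z + w)) ∧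
    (∀ (x : E) (y : F), uE x + uF y ≤ tensVal uE uF (x ⊗ₜ[K] y)) ∧
    (∀ w : E ⊗[K] F → EReal,
      (∀ (a : K) (z : E ⊗[K] F), w (a • z) = v a + w z) →
      (∀ z z' : E ⊗[K] F, min (w z) (w z') ≤ w (z + z')) →
      (∀ (x : E) (y : F), uE x + uF y ≤ w (x ⊗ₜ[K] y)) →
      ∀ z, tensVal uE uF z ≤ w z) := by
  refine ⟨fun a z => ?_, min_tensVal_le_tensVal_add, le_tensVal_tmul,
    fun w hwsmul hwadd hwtmul => tensVal_le_of_le_tmul ?_ hwadd hwtmul⟩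
  · rcases eq_or_ne a 0 with rfl | ha
    · rw [zero_smul, hv0, tensVal_zero, EReal.top_add_of_ne_bot (tensVal_ne_bot uEbot uFbot z)]
    · exact tensVal_smul_of_ne_zero ha (hvbot a) (uEsmul a) z
  · exact apply_zero_eq_top_of_map_smul hv0 hwsmul <|
      ne_bot_of_le_ne_bot (EReal.add_ne_bot_iff.2 ⟨uEbot 0, uFbot 0⟩) (by simpa using hwtmul 0 0)

/-- the tensor product valuation is a vector space valuation on `E ⊗[K] F`,
it satisfies `(u_E ⊗ u_F)(x ⊗ y) ≥ u_E x + u_F y`, and it is the least valuation doing so. -/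
theorem tensVal_is_least_valuation {K E F : Type*} [Field K]
    [AddCommGroup E] [Module K E] [AddCommGroup F] [Module K F]
    (v : K → EReal) (hv0 : v 0 = ⊤) (hvbot : ∀ a, v a ≠ ⊥)
    (hvmul : ∀ a b, v (a * b) = v a + v b)
    (hvadd : ∀ a b, min (v a) (v b) ≤ v (a + b))
    (uE : E → EReal) (uEbot : ∀ x, uE x ≠ ⊥)
    (uEsmul : ∀ (a : K) (x : E), uE (a • x) = v a + uE x)
    (uEadd : ∀ x y, min (uE x) (uE y) ≤ uE (x + y))
    (uF : F → EReal) (uFbot : ∀ y, uF y ≠ ⊥)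
    (uFsmul : ∀ (a : K) (y : F), uF (a • y) = v a + uF y)
    (uFadd : ∀ x y, min (uF x) (uF y) ≤ uF (x + y)) :
    (∀ (a : K) (z : E ⊗[K] F), tensVal uE uF (a • z) = v a + tensVal uE uF z) ∧
    (∀ z w : E ⊗[K] F, min (tensVal uE uF z) (tensVal uE uF w) ≤ tensVal uE uF (z + w)) ∧
    (∀ (x : E) (y : F), uE x + uF y ≤ tensVal uE uF (x ⊗ₜ[K] y)) ∧
    (∀ w : E ⊗[K] F → EReal,
      (∀ (a : K) (z : E ⊗[K] F), w (a • z) = v a + w z) →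
      (∀ z z' : E ⊗[K] F, min (w z) (w z') ≤ w (z + z')) →
      (∀ (x : E) (y : F), uE x + uF y ≤ w (x ⊗ₜ[K] y)) →
      ∀ z, tensVal uE uF z ≤ w z) :=
  tensVal_is_least_valuation_general v hv0 hvbot uE uEbot uEsmul uF uFbot
end

section
/- Let E be a finite-dimensional valued K-vector space over a complete algebraically closed non-trivially valued field K, with basis x = (x₀,…,x_{m−1}) and reduced valuation u. Then vol_x E = Σ_{i<m} u(x_i + F_i), where F_i = span(x_j : j < i) and u(x_i + F_i) = sup{u(y) : y ∈ x_i + F_i}. -/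
open scoped TensorProduct

/-- The tensor power valuation `u^{⊗ι}` on `⨂[K] (i : ι), E`. -/
noncomputable def powVal {K : Type*} [Field K] {ι : Type*} [Fintype ι]
    {E : Type*} [AddCommGroup E] [Module K E]
    (u : E → EReal) (z : PiTensorProduct K (fun _ : ι => E)) : EReal :=
  sSup { r : EReal | ∃ P : List (ι → E),
    (P.map fun f => PiTensorProduct.tprod K f).sum = z ∧
    r = (P.map fun f => ∑ i, u (f i)).foldr min ⊤ }

/-- The antisymmetrized tensor `x^∧`. -/
noncomputable def wedgeTensor (K : Type*) [Field K] {ι : Type*} [Fintype ι] [DecidableEq ι]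
    {E : Type*} [AddCommGroup E] [Module K E] (x : ι → E) :
    PiTensorProduct K (fun _ : ι => E) :=
  ∑ σ : Equiv.Perm ι, ((Equiv.Perm.sign σ : ℤ) • PiTensorProduct.tprod K (fun i => x (σ i)))

/-!
Lower bound: if `yᵢ ∈ bᵢ + Fᵢ` for all `i`, the change of basis from `b` to `y` is unitriangular,
so `b^∧ = y^∧ = ∑_σ ± ⊗ᵢ y_{σ i}`, a representation all of whose terms have value `∑ u(yᵢ)`;
now let `u(yᵢ)` approach `u(bᵢ + Fᵢ)`.

Upper bound: choose such `y` with `u(bᵢ + Fᵢ) ≤ u(yᵢ) + ε`. Peeling off the top coordinate of a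
vector one step at a time shows that `y` is almost orthogonal: `u(w) ≤ v(yⱼ*(w)) + u(yⱼ) + mε` for
every `j`. The linear form `⊗ᵢ xᵢ ↦ ∏ᵢ yᵢ*(xᵢ)` maps `b^∧ = y^∧` to `det_y y = 1`, so any
representation `b^∧ = ∑ₖ ⊗ᵢ fₖᵢ` has a term with `v(∏ᵢ yᵢ*(fₖᵢ)) ≤ 0`, and then
`∑ᵢ u(fₖᵢ) ≤ ∑ᵢ u(yᵢ) + m²ε`.
-/

namespace EReal

theorem sum_le_of_forall_lt {ι : Type*} {s : Finset ι} {c : ι → EReal} {P : EReal}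
    (h : ∀ t : ι → EReal, (∀ i ∈ s, t i < c i) → ∑ i ∈ s, t i ≤ P) : ∑ i ∈ s, c i ≤ P := by
  classical
  induction s using Finset.induction_on generalizing P with
  | empty => simpa using h c (by simp)
  | insert a s ha ih =>
    rw [Finset.sum_insert ha]
    refine add_le_of_forall_lt fun a' ha' b' hb' => ?_
    induction a' with
    | bot => simp
    | top => exact absurd ha' not_top_lt
    | coe r =>
      -- fixing the term at `a` to the real `r` turns the claim for `s` into the bound `P - r`
      suffices ∑ i ∈ s, c i ≤ P - r by
        rw [add_comm, ← le_sub_iff_add_le (.inl (coe_ne_bot r)) (.inl (coe_ne_top r))]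
        exact hb'.le.trans this
      refine ih fun t ht => ?_
      have := h (Function.update t a r) fun i hi => by
        rcases Finset.mem_insert.1 hi with rfl | hi
        · simpa using ha'
        · simpa [Function.update_of_ne (ne_of_mem_of_not_mem hi ha)] using ht i hi
      rw [Finset.sum_insert ha, Function.update_self,
        Finset.sum_congr rfl fun i hi => Function.update_of_ne (ne_of_mem_of_not_mem hi ha) _ _,
        add_comm] at this
      rwa [le_sub_iff_add_le (.inl (coe_ne_bot r)) (.inl (coe_ne_top r))]

theorem sum_ne_bot {ι : Type*} {s : Finset ι} {f : ι → EReal} (h : ∀ i ∈ s, f i ≠ ⊥) :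
    ∑ i ∈ s, f i ≠ ⊥ := by
  classical
  induction s using Finset.induction_on with
  | empty => simp
  | insert a s ha ih =>
    rw [Finset.sum_insert ha]
    exact add_ne_bot_iff.2 ⟨h a (by simp), ih fun i hi => h i (by simp [hi])⟩

theorem sum_eq_top_of_eq_top {ι : Type*} {s : Finset ι} {f : ι → EReal} (h : ∀ i ∈ s, f i ≠ ⊥)
    {i : ι} (hi : i ∈ s) (hfi : f i = ⊤) : ∑ i ∈ s, f i = ⊤ := by
  classical
  rw [← Finset.add_sum_erase s f hi, hfi]
  exact top_add_of_ne_bot (sum_ne_bot fun j hj => h j (Finset.mem_of_mem_erase hj))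

theorem exists_mem_sSup_le_add {S : Set EReal} (hbot : sSup S ≠ ⊥) (htop : sSup S ≠ ⊤)
    {ε : ℝ} (hε : 0 < ε) : ∃ x ∈ S, sSup S ≤ x + ε := by
  lift sSup S to ℝ using ⟨htop, hbot⟩ with r hr
  have hlt : ((r - ε : ℝ) : EReal) < sSup S := by rw [← hr]; exact_mod_cast sub_lt_self r hε
  obtain ⟨x, hxS, hx⟩ := lt_sSup_iff.1 hlt
  refine ⟨x, hxS, ?_⟩
  rw [← sub_le_iff_le_add (.inl (coe_ne_bot ε)) (.inl (coe_ne_top ε))]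
  exact_mod_cast hx.le

theorem le_of_forall_pos_le_add {x y : EReal} (h : ∀ ε : ℝ, 0 < ε → y ≤ x + ε) : y ≤ x := by
  refine le_of_forall_lt_iff_le.1 fun z hz => ?_
  induction x with
  | bot => simp [by simpa using h 1 one_pos]
  | top => exact absurd hz not_top_lt
  | coe r =>
    have := h (z - r) (by simpa using hz)
    rwa [← coe_add, add_sub_cancel] at this

end EReal

section Valuation

variable {K : Type*} [Field K] {v : K → EReal}

theorem val_one_eq_zero (hvbot : ∀ a, v a ≠ ⊥) (hvmul : ∀ a b, v (a * b) = v a + v b)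
    (hker : ∀ a : K, v a = ⊤ → a = 0) : v 1 = 0 := by
  have h := hvmul 1 1
  rw [one_mul] at h
  lift v 1 to ℝ using ⟨fun h => one_ne_zero (hker 1 h), hvbot 1⟩ with r
  have : r = r + r := by exact_mod_cast h
  simp [show r = 0 by linarith]

theorem val_neg_one_eq_zero (hvmul : ∀ a b, v (a * b) = v a + v b) (hv1 : v 1 = 0) :
    v (-1) = 0 := by
  have h := hvmul (-1) (-1)
  rw [neg_one_mul, neg_neg, hv1] at h
  generalize v (-1) = x at h ⊢
  induction x with
  | bot => simp at h
  | top => simp at h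
  | coe r =>
    have : r + r = 0 := by exact_mod_cast h.symm
    simp [show r = 0 by linarith]

theorem val_prod (hvmul : ∀ a b, v (a * b) = v a + v b) (hv1 : v 1 = 0) {ι : Type*}
    (s : Finset ι) (f : ι → K) : v (∏ i ∈ s, f i) = ∑ i ∈ s, v (f i) := by
  classical
  induction s using Finset.induction_on with
  | empty => simpa using hv1
  | insert a s ha ih => rw [Finset.prod_insert ha, Finset.sum_insert ha, hvmul, ih]

theorem exists_val_nonpos_of_sum_eq_one (hv0 : v 0 = ⊤)
    (hvadd : ∀ a b, min (v a) (v b) ≤ v (a + b)) (hv1 : v 1 = 0) {l : List K} (hl : l.sum = 1) :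
    ∃ a ∈ l, v a ≤ 0 := by
  have hsum_pos : ∀ l : List K, (∀ a ∈ l, 0 < v a) → 0 < v l.sum := by
    intro l hpos
    induction l with
    | nil => simp [hv0]
    | cons a l ih =>
      rw [List.sum_cons]
      refine lt_of_lt_of_le (lt_min (hpos a (by simp)) ?_) (hvadd _ _)
      exact ih fun b hb => hpos b (by simp [hb])
  by_contra! hpos
  simpa [hl, hv1] using hsum_pos l hpos

end Valuation

theorem List.le_foldr_min_iff {α : Type*} [LinearOrder α] [OrderTop α] {r : α} {l : List α} :
    r ≤ l.foldr min ⊤ ↔ ∀ a ∈ l, r ≤ a := by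
  induction l with
  | nil => simp
  | cons a l ih => simp [ih]

theorem AlternatingMap.apply_eq_basis_det_smul {R M N ι : Type*} [CommRing R] [AddCommGroup M]
    [Module R M] [AddCommGroup N] [Module R N] [Fintype ι] [DecidableEq ι]
    (e : Module.Basis ι R M) (f : M [⋀^ι]→ₗ[R] N) (x : ι → M) : f x = e.det x • f e := by
  suffices f = e.det.smulRight (f e) from congrFun (congrArg DFunLike.coe this) x
  refine Module.Basis.ext_alternating e fun i h => ?_
  let σ : Equiv.Perm ι := Equiv.ofBijective i (Finite.injective_iff_bijective.1 h)
  change f (e ∘ σ) = e.det.smulRight (f e) (e ∘ σ)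
  simp [AlternatingMap.map_perm, Module.Basis.det_self, AlternatingMap.smulRight_apply]

section Triangular

variable {R M ι : Type*} [CommRing R] [AddCommGroup M] [Module R M] [LinearOrder ι]
  (b : Module.Basis ι R M) {y : ι → M}

theorem Module.Basis.repr_apply_eq_of_sub_mem_span_lt
    (hy : ∀ i, y i - b i ∈ Submodule.span R (b '' {j | j < i})) {i j : ι} (hij : ¬i < j) :
    b.repr (y j) i = b.repr (b j) i := by
  have hsupp := b.mem_span_image.1 (hy j)
  have : b.repr (y j - b j) i = 0 := Finsupp.notMem_support_iff.1 fun hi => hij (hsupp hi)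
  rwa [map_sub, Finsupp.sub_apply, sub_eq_zero] at this

theorem Module.Basis.det_eq_one_of_sub_mem_span_lt [Fintype ι] [DecidableEq ι]
    (hy : ∀ i, y i - b i ∈ Submodule.span R (b '' {j | j < i})) : b.det y = 1 := by
  rw [b.det_apply, Matrix.det_of_isUpperTriangular]
  · refine Finset.prod_eq_one fun i _ => ?_
    simp [Module.Basis.toMatrix_apply, b.repr_apply_eq_of_sub_mem_span_lt hy (lt_irrefl i)]
  · intro i j (hji : j < i)
    rw [Module.Basis.toMatrix_apply, b.repr_apply_eq_of_sub_mem_span_lt hy (not_lt_of_gt hji),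
      b.repr_self, Finsupp.single_eq_of_ne hji.ne']

theorem Module.Basis.span_image_lt_le_of_sub_mem_span_lt
    (hy : ∀ i, y i - b i ∈ Submodule.span R (b '' {j | j < i})) (i : ι) :
    Submodule.span R (y '' {j | j < i}) ≤ Submodule.span R (b '' {j | j < i}) := by
  refine Submodule.span_le.2 ?_
  rintro _ ⟨j, hj, rfl⟩
  have hspan : Submodule.span R (b '' {l | l < j}) ≤ Submodule.span R (b '' {l | l < i}) :=
    Submodule.span_mono (Set.image_mono fun l hl => lt_trans hl hj)
  rw [← sub_add_cancel (y j) (b j)]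
  exact add_mem (hspan (hy j)) (Submodule.subset_span ⟨j, hj, rfl⟩)

end Triangular

section Tensor

variable {K E ι : Type*} [Field K] [AddCommGroup E] [Module K E] [Fintype ι] {v : K → EReal}
  {u : E → EReal}

theorem le_powVal_of_sum_tprod_eq {κ : Type*} (s : Finset κ) (f : κ → ι → E)
    {z : PiTensorProduct K fun _ : ι => E} (hz : ∑ k ∈ s, PiTensorProduct.tprod K (f k) = z)
    {r : EReal} (hr : ∀ k ∈ s, r ≤ ∑ i, u (f k i)) : r ≤ powVal u z := by
  refine le_sSup_of_le ⟨s.toList.map f, by simpa [List.map_map, Function.comp_def] using hz, rfl⟩ ?_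
  simpa [List.le_foldr_min_iff] using hr

theorem exists_tprod_eq_sign_smul_tprod [DecidableEq ι] (σ : Equiv.Perm ι) (x : ι → E) :
    ∃ g : ι → E, PiTensorProduct.tprod K g = (Equiv.Perm.sign σ : ℤ) • PiTensorProduct.tprod K x ∧
      ∀ i, g i = x i ∨ g i = -x i := by
  rcases Int.units_eq_one_or (Equiv.Perm.sign σ) with h | h
  · exact ⟨x, by simp [h], fun i => .inl rfl⟩
  · obtain ⟨i₀⟩ : Nonempty ι := by
      by_contra hι
      have : IsEmpty ι := not_nonempty_iff.1 hι
      simp [Subsingleton.elim σ 1] at h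
    refine ⟨Function.update x i₀ (-x i₀), ?_, fun i => ?_⟩
    · rw [MultilinearMap.map_update_neg, Function.update_eq_self, h]
      simp
    · rcases eq_or_ne i i₀ with rfl | hi
      · simp
      · simp [hi]

theorem sum_le_powVal_wedgeTensor [DecidableEq ι] (hneg : ∀ x, u (-x) = u x) (x : ι → E) :
    ∑ i, u (x i) ≤ powVal u (wedgeTensor K x) := by
  choose g hg hgx using fun σ : Equiv.Perm ι => exists_tprod_eq_sign_smul_tprod (K := K) σ (x ∘ σ)
  refine le_powVal_of_sum_tprod_eq Finset.univ g (by simp [wedgeTensor, hg, Function.comp_def])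
    fun σ _ => le_of_eq ?_
  calc ∑ i, u (x i) = ∑ i, u (x (σ i)) := (Equiv.sum_comp σ _).symm
    _ = ∑ i, u (g σ i) := Finset.sum_congr rfl fun i _ => by
      rcases hgx σ i with h | h <;> simp [h, hneg]

theorem wedgeTensor_eq_alternatization [DecidableEq ι] (x : ι → E) :
    wedgeTensor K x = MultilinearMap.alternatization (PiTensorProduct.tprod K) x := by
  simp [wedgeTensor, MultilinearMap.alternatization_apply, Units.smul_def]

theorem wedgeTensor_eq_of_sub_mem_span_lt [DecidableEq ι] [LinearOrder ι] (b : Module.Basis ι K E)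
    {y : ι → E} (hy : ∀ i, y i - b i ∈ Submodule.span K (b '' {j | j < i})) :
    wedgeTensor K y = wedgeTensor K b := by
  rw [wedgeTensor_eq_alternatization, wedgeTensor_eq_alternatization,
    AlternatingMap.apply_eq_basis_det_smul b, b.det_eq_one_of_sub_mem_span_lt hy, one_smul]

noncomputable def coordProd (y : Module.Basis ι K E) :
    (PiTensorProduct K fun _ : ι => E) →ₗ[K] K :=
  PiTensorProduct.lift ((MultilinearMap.mkPiAlgebra K ι K).compLinearMap y.coord)

theorem coordProd_tprod (y : Module.Basis ι K E) (f : ι → E) :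
    coordProd y (PiTensorProduct.tprod K f) = ∏ i, y.coord i (f i) := by
  simp [coordProd]

theorem coordProd_wedgeTensor [DecidableEq ι] (y : Module.Basis ι K E) (x : ι → E) :
    coordProd y (wedgeTensor K x) = y.det x := by
  rw [wedgeTensor, map_sum, y.det_apply, ← Matrix.det_transpose, Matrix.det_apply]
  refine Finset.sum_congr rfl fun σ _ => ?_
  simp [coordProd_tprod, Units.smul_def, Module.Basis.toMatrix_apply]

theorem powVal_wedgeTensor_basis_le [DecidableEq ι] (hv0 : v 0 = ⊤) (hv1 : v 1 = 0)
    (hvmul : ∀ a b, v (a * b) = v a + v b) (hvadd : ∀ a b, min (v a) (v b) ≤ v (a + b))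
    (y : Module.Basis ι K E) {δ : EReal} (hδ : ∀ w j, u w ≤ v (y.coord j w) + u (y j) + δ) :
    powVal u (wedgeTensor K ⇑y) ≤ ∑ i, u (y i) + Fintype.card ι • δ := by
  refine sSup_le ?_
  rintro _ ⟨P, hP, rfl⟩
  have hsum : (P.map fun f => ∏ i, y.coord i (f i)).sum = 1 := by
    have := congrArg (coordProd y) hP
    rwa [coordProd_wedgeTensor, y.det_self, map_list_sum, List.map_map,
      show coordProd y ∘ (fun f => PiTensorProduct.tprod K f) = fun f => ∏ i, y.coord i (f i)
        from funext (coordProd_tprod y)] at this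
  obtain ⟨_, hf, hvf⟩ := exists_val_nonpos_of_sum_eq_one hv0 hvadd hv1 hsum
  obtain ⟨f, hfP, rfl⟩ := List.mem_map.1 hf
  calc (P.map fun f => ∑ i, u (f i)).foldr min ⊤
      ≤ ∑ i, u (f i) := List.le_foldr_min_iff.1 le_rfl _ (List.mem_map_of_mem hfP)
    _ ≤ ∑ i, (v (y.coord i (f i)) + u (y i) + δ) := Finset.sum_le_sum fun i _ => hδ _ _
    _ = v (∏ i, y.coord i (f i)) + ∑ i, u (y i) + Fintype.card ι • δ := by
      rw [Finset.sum_add_distrib, Finset.sum_add_distrib, val_prod hvmul hv1, Finset.sum_const,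
        Finset.card_univ]
    _ ≤ ∑ i, u (y i) + Fintype.card ι • δ := by
      gcongr
      exact add_le_of_nonpos_left hvf

end Tensor

section NearOrthogonal

variable {K E ι : Type*} [Field K] [AddCommGroup E] [Module K E] [Fintype ι] [LinearOrder ι]
  {v : K → EReal} {u : E → EReal}

theorem le_map_sub_add_of_le_map_add (huadd : ∀ x y, min (u x) (u y) ≤ u (x + y))
    (hneg : ∀ x, u (-x) = u x) {w x : E} {ε : EReal} (hε : 0 ≤ ε) (h : u w ≤ u x + ε) :
    u w ≤ u (w - x) + ε :=
  calc u w ≤ min (u w) (u x) + ε := by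
        rw [← min_add_add_right]
        exact le_min (le_add_of_nonneg_right hε) h
    _ ≤ u (w - x) + ε := by
        gcongr
        simpa [sub_eq_add_neg, hneg] using huadd w (-x)

theorem le_val_smul_add_of_forall_sub_mem (hv0 : v 0 = ⊤)
    (husmul : ∀ (a : K) (x : E), u (a • x) = v a + u x) {S : Submodule K E} {x : E}
    (hx : u x ≠ ⊥) {ε : EReal} (hε : ε ≠ ⊥) (hopt : ∀ w, w - x ∈ S → u w ≤ u x + ε) (c : K)
    {z : E} (hz : z ∈ S) : u (c • x + z) ≤ v c + u x + ε := by
  rcases eq_or_ne c 0 with rfl | hc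
  · rw [hv0, EReal.top_add_of_ne_bot hx, EReal.top_add_of_ne_bot hε]
    exact le_top
  have hz' : (x + c⁻¹ • z) - x ∈ S := by
    rw [add_sub_cancel_left]
    exact S.smul_mem _ hz
  rw [← smul_inv_smul₀ hc z, ← smul_add, husmul, add_assoc]
  gcongr
  exact hopt _ hz'

theorem le_val_coord_add_card_nsmul (hv0 : v 0 = ⊤) (hubot : ∀ x, u x ≠ ⊥)
    (husmul : ∀ (a : K) (x : E), u (a • x) = v a + u x)
    (huadd : ∀ x y, min (u x) (u y) ≤ u (x + y)) (hneg : ∀ x, u (-x) = u x)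
    (y : Module.Basis ι K E) {ε : EReal} (hε : 0 ≤ ε)
    (hopt : ∀ i w, w - y i ∈ Submodule.span K (y '' {j | j < i}) → u w ≤ u (y i) + ε)
    (w : E) (j : ι) : u w ≤ v (y.coord j w) + u (y j) + Fintype.card ι • ε := by
  have hεbot : ε ≠ ⊥ := ne_bot_of_le_ne_bot EReal.zero_ne_bot hε
  suffices ∀ s : Finset ι, ∀ w ∈ Submodule.span K (y '' s), ∀ j,
      u w ≤ v (y.coord j w) + u (y j) + s.card • ε by
    simpa using this Finset.univ w (by simp [y.span_eq]) j
  intro s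
  induction s using Finset.induction_on_max with
  | empty =>
    intro w hw j
    rw [Finset.coe_empty, Set.image_empty, Submodule.span_empty, Submodule.mem_bot] at hw
    rw [hw, map_zero, hv0, EReal.top_add_of_ne_bot (hubot _), Finset.card_empty, zero_nsmul,
      add_zero]
    exact le_top
  | insert a s has ih =>
    intro w hw j
    have ha : a ∉ s := fun h => lt_irrefl a (has a h)
    rw [Finset.coe_insert, Set.image_insert_eq, Submodule.mem_span_insert] at hw
    obtain ⟨c, z, hz, rfl⟩ := hw
    have hza : y.repr z a = 0 :=
      Finsupp.notMem_support_iff.1 fun h => ha (y.mem_span_image.1 hz h)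
    have hwa : u (c • y a + z) ≤ v c + u (y a) + ε :=
      le_val_smul_add_of_forall_sub_mem hv0 husmul (hubot _) hεbot (hopt a) c
        (Submodule.span_mono (Set.image_mono fun x hx => has x hx) hz)
    rw [Finset.card_insert_of_notMem ha, succ_nsmul]
    rcases eq_or_ne j a with rfl | hja
    · have : y.coord j (c • y j + z) = c := by simp [hza]
      rw [this]
      refine hwa.trans ?_
      gcongr
      exact le_add_of_nonneg_left (nsmul_nonneg hε _)
    · have hcoord : y.coord j (c • y a + z) = y.coord j z := by simp [hja.symm]
      have hwz := le_map_sub_add_of_le_map_add huadd hneg hε ((husmul c (y a)).symm ▸ hwa)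
      rw [add_sub_cancel_left] at hwz
      rw [hcoord, ← add_assoc]
      exact hwz.trans (by gcongr; exact ih z hz j)

end NearOrthogonal

section CosetVal

variable {K E ι : Type*} [Field K] [AddCommGroup E] [Module K E] [LinearOrder ι] {v : K → EReal}
  {u : E → EReal}

/-- The quotient value `u(bᵢ + Fᵢ)`. -/
noncomputable def cosetVal (u : E → EReal) (b : Module.Basis ι K E) (i : ι) : EReal :=
  sSup (u '' {y | y - b i ∈ Submodule.span K (b '' {j | j < i})})

theorem le_cosetVal (b : Module.Basis ι K E) {i : ι} {w : E}
    (hw : w - b i ∈ Submodule.span K (b '' {j | j < i})) : u w ≤ cosetVal u b i :=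
  le_sSup ⟨w, hw, rfl⟩

theorem cosetVal_ne_bot (hubot : ∀ x, u x ≠ ⊥) (b : Module.Basis ι K E) (i : ι) :
    cosetVal u b i ≠ ⊥ :=
  ne_bot_of_le_ne_bot (hubot (b i)) (le_cosetVal b (by simp))

variable [Fintype ι] [DecidableEq ι]

theorem sum_cosetVal_le_powVal_wedgeTensor (hneg : ∀ x, u (-x) = u x) (b : Module.Basis ι K E) :
    ∑ i, cosetVal u b i ≤ powVal u (wedgeTensor K b) := by
  refine EReal.sum_le_of_forall_lt fun t ht => ?_
  have hchoice : ∀ i, ∃ w, w - b i ∈ Submodule.span K (b '' {j | j < i}) ∧ t i < u w := fun i => by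
    obtain ⟨_, ⟨w, hw, rfl⟩, hlt⟩ := lt_sSup_iff.1 (ht i (Finset.mem_univ i))
    exact ⟨w, hw, hlt⟩
  choose y hy hty using hchoice
  calc ∑ i, t i ≤ ∑ i, u (y i) := Finset.sum_le_sum fun i _ => (hty i).le
    _ ≤ powVal u (wedgeTensor K y) := sum_le_powVal_wedgeTensor hneg y
    _ = powVal u (wedgeTensor K b) := by rw [wedgeTensor_eq_of_sub_mem_span_lt b hy]

theorem exists_basis_sub_mem_span_lt_near_optimal (hubot : ∀ x, u x ≠ ⊥)
    (b : Module.Basis ι K E) (htop : ∀ i, cosetVal u b i ≠ ⊤) {ε : ℝ} (hε : 0 < ε) :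
    ∃ y : Module.Basis ι K E, (∀ i, y i - b i ∈ Submodule.span K (b '' {j | j < i})) ∧
      ∀ i w, w - y i ∈ Submodule.span K (y '' {j | j < i}) → u w ≤ u (y i) + ε := by
  have hchoice : ∀ i, ∃ w, w - b i ∈ Submodule.span K (b '' {j | j < i}) ∧
      cosetVal u b i ≤ u w + ε := fun i => by
    obtain ⟨_, ⟨w, hw, rfl⟩, hle⟩ :=
      EReal.exists_mem_sSup_le_add (cosetVal_ne_bot hubot b i) (htop i) hε
    exact ⟨w, hw, hle⟩
  choose y hy hopt using hchoice
  have hbasis := (b.is_basis_iff_det (v := y)).2 (by simp [b.det_eq_one_of_sub_mem_span_lt hy])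
  refine ⟨Module.Basis.mk hbasis.1 hbasis.2.ge, by simpa using hy, fun i w hw => ?_⟩
  simp only [Module.Basis.coe_mk] at hw ⊢
  refine le_trans (le_cosetVal b ?_) (hopt i)
  simpa using add_mem (b.span_image_lt_le_of_sub_mem_span_lt hy i hw) (hy i)

theorem powVal_wedgeTensor_le_sum_cosetVal (hv0 : v 0 = ⊤) (hv1 : v 1 = 0)
    (hvmul : ∀ a b, v (a * b) = v a + v b) (hvadd : ∀ a b, min (v a) (v b) ≤ v (a + b))
    (hubot : ∀ x, u x ≠ ⊥) (husmul : ∀ (a : K) (x : E), u (a • x) = v a + u x)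
    (huadd : ∀ x y, min (u x) (u y) ≤ u (x + y)) (hneg : ∀ x, u (-x) = u x)
    (b : Module.Basis ι K E) : powVal u (wedgeTensor K b) ≤ ∑ i, cosetVal u b i := by
  by_cases htop : ∃ i, cosetVal u b i = ⊤
  · obtain ⟨i, hi⟩ := htop
    rw [EReal.sum_eq_top_of_eq_top (fun j _ => cosetVal_ne_bot hubot b j) (Finset.mem_univ i) hi]
    exact le_top
  simp only [not_exists] at htop
  refine EReal.le_of_forall_pos_le_add fun δ hδ => ?_
  set N := Fintype.card ι
  obtain ⟨ε, hε, hεδ⟩ : ∃ ε : ℝ, 0 < ε ∧ N • N • (ε : EReal) ≤ δ := by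
    refine ⟨δ / (N * N + 1), by positivity, ?_⟩
    rw [← EReal.coe_nsmul, ← EReal.coe_nsmul, EReal.coe_le_coe_iff, nsmul_eq_mul, nsmul_eq_mul,
      ← mul_assoc, mul_div_assoc', div_le_iff₀ (by positivity)]
    nlinarith
  obtain ⟨y, hy, hopt⟩ := exists_basis_sub_mem_span_lt_near_optimal hubot b htop hε
  calc powVal u (wedgeTensor K b) = powVal u (wedgeTensor K y) := by
        rw [wedgeTensor_eq_of_sub_mem_span_lt b hy]
    _ ≤ ∑ i, u (y i) + N • N • (ε : EReal) :=
        powVal_wedgeTensor_basis_le hv0 hv1 hvmul hvadd y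
          (le_val_coord_add_card_nsmul hv0 hubot husmul huadd hneg y (by exact_mod_cast hε.le) hopt)
    _ ≤ ∑ i, cosetVal u b i + δ := by
        gcongr with i
        exact le_cosetVal b (hy i)

end CosetVal

theorem volume_eq_sum_quotient_values_general {K E : Type*} [Field K]
    [AddCommGroup E] [Module K E]
    (v : K → EReal) (hv0 : v 0 = ⊤) (hvbot : ∀ a, v a ≠ ⊥)
    (hvmul : ∀ a b, v (a * b) = v a + v b)
    (hvadd : ∀ a b, min (v a) (v b) ≤ v (a + b))
    (hker : ∀ a : K, v a = ⊤ → a = 0)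
    (u : E → EReal) (hubot : ∀ x, u x ≠ ⊥)
    (husmul : ∀ (a : K) (x : E), u (a • x) = v a + u x)
    (huadd : ∀ x y, min (u x) (u y) ≤ u (x + y))
    {m : ℕ} (b : Module.Basis (Fin m) K E) :
    powVal u (wedgeTensor K ⇑b) =
      ∑ i : Fin m,
        sSup (u '' {y : E | y - b i ∈ Submodule.span K (⇑b '' {j : Fin m | j < i})}) := by
  have hv1 : v 1 = 0 := val_one_eq_zero hvbot hvmul hker
  have hneg : ∀ x, u (-x) = u x := fun x => by
    rw [← neg_one_smul K x, husmul, val_neg_one_eq_zero hvmul hv1, zero_add]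
  exact le_antisymm
    (powVal_wedgeTensor_le_sum_cosetVal hv0 hv1 hvmul hvadd hubot husmul huadd hneg b)
    (sum_cosetVal_le_powVal_wedgeTensor hneg b)

/-- over a complete algebraically closed non-trivially valued field, for a
reduced valued vector space `E` with basis `x`, the volume equals
`Σ_i u(x_i + F_i)` where `F_i = span(x_j : j < i)` and `u(x_i + F_i)` is the quotient
(supremum) value over the coset. -/
theorem volume_eq_sum_quotient_values {K E : Type*} [Field K] [IsAlgClosed K]
    [AddCommGroup E] [Module K E]
    (v : K → EReal) (hv0 : v 0 = ⊤) (hvbot : ∀ a, v a ≠ ⊥)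
    (hvmul : ∀ a b, v (a * b) = v a + v b)
    (hvadd : ∀ a b, min (v a) (v b) ≤ v (a + b))
    (hker : ∀ a : K, v a = ⊤ → a = 0)
    (hnontriv : ∃ a : K, v a ≠ 0 ∧ v a ≠ ⊤)
    (hcomplete : ∀ f : ℕ → K,
      (∀ r : ℝ, ∃ N, ∀ p ≥ N, ∀ q ≥ N, (r : EReal) ≤ v (f p - f q)) →
      ∃ a : K, ∀ r : ℝ, ∃ N, ∀ p ≥ N, (r : EReal) ≤ v (f p - a))
    (u : E → EReal) (hubot : ∀ x, u x ≠ ⊥)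
    (husmul : ∀ (a : K) (x : E), u (a • x) = v a + u x)
    (huadd : ∀ x y, min (u x) (u y) ≤ u (x + y))
    (hured : ∀ x, u x = ⊤ → x = 0)
    {m : ℕ} (b : Module.Basis (Fin m) K E) :
    powVal u (wedgeTensor K ⇑b) =
      ∑ i : Fin m,
        sSup (u '' {y : E | y - b i ∈ Submodule.span K (⇑b '' {j : Fin m | j < i})}) :=
  volume_eq_sum_quotient_values_general v hv0 hvbot hvmul hvadd hker u hubot husmul huadd b
end
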